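/- arXiv:1502.06746 — 2 statements merged into one kernel-verified Lean document; each statement's English description precedes it below -/
import Mathlib

section
/- Let P be a harmonic polynomial on ℝ^{k+1}, homogeneous of degree ℓ. Then its restriction to the unit sphere S^k is an eigenfunction of the spherical Laplacian Δ_{S^k} with eigenvalue ℓ(k+ℓ−1), i.e. Δ_{S^k}(P|_{S^k}) = −ℓ(k+ℓ−1)·P|_{S^k} (with the geometer's sign convention Δ = div grad). -/
/-
Near the unit sphere, homogeneity gives `f (‖x‖⁻¹ • x) = ‖x‖ ^ (-ℓ) * f x`, so the spherical
Laplacian is the Euclidean Laplacian of this product. The product rule, the formulas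
`Δ ‖x‖ ^ r = r (r + n - 2) ‖x‖ ^ (r - 2)` and `∇ ‖x‖ ^ r = r ‖x‖ ^ (r - 2) • x`, and Euler's
identity `⟪x, ∇ f x⟫ = ℓ f x` turn it into `Δ f - ℓ (n + ℓ - 2) f` on the sphere, where `n = k + 1`;
harmonicity kills `Δ f`.
-/

open MeasureTheory Metric MvPolynomial

/-- The Euclidean Laplacian (sum of second derivatives along the standard basis). -/
noncomputable def lap {n : ℕ} (f : EuclideanSpace ℝ (Fin n) → ℝ)
    (x : EuclideanSpace ℝ (Fin n)) : ℝ :=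
  ∑ i, iteratedFDeriv ℝ 2 f x ![EuclideanSpace.single i 1, EuclideanSpace.single i 1]

/-- The Laplace–Beltrami operator of the unit sphere, computed as the Euclidean Laplacian of
the degree-zero homogeneous extension (evaluated at points of the sphere). -/
noncomputable def sphereLaplacian {n : ℕ} (f : EuclideanSpace ℝ (Fin n) → ℝ)
    (θ : EuclideanSpace ℝ (Fin n)) : ℝ :=
  lap (fun x => f (‖x‖⁻¹ • x)) θ

open Filter Topology InnerProductSpace
open scoped Gradient RealInnerProductSpace Laplacian

theorem MvPolynomial.contDiff_eval {σ : Type*} [Fintype σ] {N : WithTop ℕ∞}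
    (p : MvPolynomial σ ℝ) : ContDiff ℝ N (fun x : σ → ℝ => eval x p) := by
  induction p using MvPolynomial.induction_on with
  | C a => simpa using contDiff_const
  | add p q hp hq => simpa using hp.add hq
  | mul_X p i hp => simpa using hp.mul (contDiff_apply ℝ ℝ i)

theorem fderiv_apply_self_of_homogeneous {E F : Type*} [NormedAddCommGroup E] [NormedSpace ℝ E]
    [NormedAddCommGroup F] [NormedSpace ℝ F] {f : E → F} {x : E} {ℓ : ℕ}
    (hf : DifferentiableAt ℝ f x) (hhom : ∀ t : ℝ, 0 < t → f (t • x) = t ^ ℓ • f x) :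
    fderiv ℝ f x x = (ℓ : ℝ) • f x := by
  have hD : HasDerivAt (fun t : ℝ => f (t • x)) (fderiv ℝ f x x) 1 := by
    have hf' : HasFDerivAt f (fderiv ℝ f x) ((1 : ℝ) • x) := by
      rw [one_smul]
      exact hf.hasFDerivAt
    simpa [Function.comp_def] using
      hf'.comp_hasDerivAt (1 : ℝ) ((hasDerivAt_id (1 : ℝ)).smul_const x)
  have hpow : HasDerivAt (fun t : ℝ => f (t • x)) ((ℓ : ℝ) • f x) 1 := by
    refine (((hasDerivAt_pow ℓ (1 : ℝ)).smul_const (f x)).congr_of_eventuallyEq ?_).congr_deriv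
      (by simp)
    filter_upwards [eventually_gt_nhds zero_lt_one] with t ht using hhom t ht
  exact hD.unique hpow

section SecondDerivative

variable {E : Type*} [NormedAddCommGroup E] [NormedSpace ℝ E] {f g : E → ℝ} {x : E}

theorem iteratedFDeriv_two_mul_apply (hf : ContDiffAt ℝ 2 f x) (hg : ContDiffAt ℝ 2 g x)
    (v w : E) :
    iteratedFDeriv ℝ 2 (f * g) x ![v, w] =
      f x * iteratedFDeriv ℝ 2 g x ![v, w]
        + (fderiv ℝ f x v * fderiv ℝ g x w + fderiv ℝ f x w * fderiv ℝ g x v)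
        + g x * iteratedFDeriv ℝ 2 f x ![v, w] := by
  have hD : fderiv ℝ (f * g) =ᶠ[𝓝 x] f • fderiv ℝ g + g • fderiv ℝ f := by
    filter_upwards [hf.eventually (by simp), hg.eventually (by simp)] with y hfy hgy
    exact fderiv_mul (hfy.differentiableAt two_ne_zero) (hgy.differentiableAt two_ne_zero)
  have hf' := (hf.fderiv_right (m := 1) le_rfl).differentiableAt one_ne_zero
  have hg' := (hg.fderiv_right (m := 1) le_rfl).differentiableAt one_ne_zero
  have hf1 := (hf.differentiableAt two_ne_zero).hasFDerivAt
  have hg1 := (hg.differentiableAt two_ne_zero).hasFDerivAt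
  rw [iteratedFDeriv_two_apply, iteratedFDeriv_two_apply, iteratedFDeriv_two_apply,
    hD.fderiv_eq, ((hf1.smul hg'.hasFDerivAt).add (hg1.smul hf'.hasFDerivAt)).fderiv]
  simp only [Matrix.cons_val_zero, Matrix.cons_val_one, Matrix.cons_val_fin_one, add_apply,
    smul_apply, ContinuousLinearMap.smulRight_apply, smul_eq_mul]
  ring

end SecondDerivative

section InnerProductSpace

variable {E : Type*} [NormedAddCommGroup E] [InnerProductSpace ℝ E] {f g : E → ℝ} {x : E}

theorem laplacian_mul [FiniteDimensional ℝ E] (hf : ContDiffAt ℝ 2 f x) (hg : ContDiffAt ℝ 2 g x) :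
    Δ (f * g) x = f x * Δ g x + 2 * ⟪∇ f x, ∇ g x⟫ + g x * Δ f x := by
  let b := stdOrthonormalBasis ℝ E
  simp only [laplacian_eq_iteratedFDeriv_orthonormalBasis _ b, iteratedFDeriv_two_mul_apply hf hg,
    Finset.sum_add_distrib, Finset.mul_sum, ← inner_gradient_left]
  rw [← b.sum_inner_mul_inner (∇ f x) (∇ g x)]
  simp_rw [real_inner_comm (∇ g x)]
  ring

theorem hasFDerivAt_norm_rpow_of_ne_zero (p : ℝ) (hx : x ≠ 0) :
    HasFDerivAt (fun y : E => ‖y‖ ^ p) ((p * ‖x‖ ^ (p - 2)) • innerSL ℝ x) x := by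
  convert ((hasStrictFDerivAt_norm_sq x).rpow_const (p := p / 2) (by simp [hx])).hasFDerivAt
    using 1
  · ext y
    rw [← Real.rpow_natCast, ← Real.rpow_mul (norm_nonneg y)]
    ring_nf
  · have h : (‖x‖ ^ 2) ^ (p / 2 - 1) = ‖x‖ ^ (p - 2) := by
      rw [← Real.rpow_natCast, ← Real.rpow_mul (norm_nonneg x)]
      ring_nf
    rw [h]
    module

theorem gradient_norm_rpow_of_ne_zero [CompleteSpace E] (p : ℝ) (hx : x ≠ 0) :
    ∇ (fun y : E => ‖y‖ ^ p) x = (p * ‖x‖ ^ (p - 2)) • x := by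
  refine (hasFDerivAt_iff_hasGradientAt.1 (hasFDerivAt_norm_rpow_of_ne_zero p hx)).gradient.trans ?_
  rw [map_smul]
  congr 1
  exact (toDual ℝ E).symm_apply_apply x

theorem iteratedFDeriv_two_norm_rpow_apply (p : ℝ) (hx : x ≠ 0) (v w : E) :
    iteratedFDeriv ℝ 2 (fun y : E => ‖y‖ ^ p) x ![v, w] =
      p * ‖x‖ ^ (p - 2) * ⟪v, w⟫ + p * (p - 2) * ‖x‖ ^ (p - 4) * ⟪x, v⟫ * ⟪x, w⟫ := by
  have hD : fderiv ℝ (fun y : E => ‖y‖ ^ p) =ᶠ[𝓝 x]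
      fun y => (p * ‖y‖ ^ (p - 2)) • innerSL ℝ y := by
    filter_upwards [eventually_ne_nhds hx] with y hy
    exact (hasFDerivAt_norm_rpow_of_ne_zero p hy).fderiv
  rw [iteratedFDeriv_two_apply, hD.fderiv_eq,
    (((hasFDerivAt_norm_rpow_of_ne_zero (p - 2) hx).const_mul p).fun_smul
      (innerSL ℝ).hasFDerivAt).fderiv]
  simp only [Matrix.cons_val_zero, Matrix.cons_val_one, Matrix.cons_val_fin_one, add_apply,
    smul_apply, ContinuousLinearMap.smulRight_apply, smul_eq_mul]
  rw [innerSL_apply_apply, innerSL_apply_apply, innerSL_apply_apply,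
    show p - 2 - 2 = p - 4 by ring]
  ring

theorem laplacian_norm_rpow [FiniteDimensional ℝ E] (p : ℝ) (hx : x ≠ 0) :
    Δ (fun y : E => ‖y‖ ^ p) x = p * (p + Module.finrank ℝ E - 2) * ‖x‖ ^ (p - 2) := by
  let b := stdOrthonormalBasis ℝ E
  have hpow : ‖x‖ ^ (p - 4) * ‖x‖ ^ 2 = ‖x‖ ^ (p - 2) := by
    rw [← Real.rpow_natCast, ← Real.rpow_add (norm_pos_iff.2 hx)]
    ring_nf
  simp only [laplacian_eq_iteratedFDeriv_orthonormalBasis _ b,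
    iteratedFDeriv_two_norm_rpow_apply p hx, Finset.sum_add_distrib, b.inner_eq_one, mul_one,
    Finset.sum_const, Finset.card_univ, Fintype.card_fin, nsmul_eq_mul, mul_assoc,
    ← Finset.mul_sum, ← sq, b.sum_sq_inner_left]
  linear_combination p * (p - 2) * hpow

theorem laplacian_comp_normalize_of_homogeneous [FiniteDimensional ℝ E] {θ : E} {ℓ : ℕ}
    (hf : ContDiffAt ℝ 2 f θ) (hhom : ∀ t : ℝ, 0 < t → ∀ x, f (t • x) = t ^ ℓ * f x)
    (hθ : ‖θ‖ = 1) :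
    Δ (fun x => f (‖x‖⁻¹ • x)) θ =
      Δ f θ - ℓ * (Module.finrank ℝ E + ℓ - 2) * f θ := by
  have hθ0 : θ ≠ 0 := norm_ne_zero_iff.1 (by simp [hθ])
  have hloc : (fun x => f (‖x‖⁻¹ • x)) =ᶠ[𝓝 θ] (fun x => ‖x‖ ^ (-ℓ : ℝ)) * f := by
    filter_upwards [eventually_ne_nhds hθ0] with x hx
    rw [hhom _ (inv_pos.2 (norm_pos_iff.2 hx)), Pi.mul_apply, Real.rpow_neg (norm_nonneg x),
      Real.rpow_natCast, inv_pow]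
  have hu : ContDiffAt ℝ 2 (fun x : E => ‖x‖ ^ (-ℓ : ℝ)) θ :=
    (contDiffAt_norm ℝ hθ0).rpow_const_of_ne (norm_ne_zero_iff.2 hθ0)
  have heuler : ⟪θ, ∇ f θ⟫ = ℓ * f θ := by
    rw [real_inner_comm, inner_gradient_left]
    exact fderiv_apply_self_of_homogeneous (hf.differentiableAt two_ne_zero) (hhom · · θ)
  rw [(laplacian_congr_nhds hloc).eq_of_nhds, laplacian_mul hu hf, laplacian_norm_rpow _ hθ0,
    gradient_norm_rpow_of_ne_zero _ hθ0, real_inner_smul_left, heuler, hθ]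
  simp only [Real.one_rpow]
  ring

end InnerProductSpace

theorem lap_eq_laplacian {n : ℕ} (f : EuclideanSpace ℝ (Fin n) → ℝ) : lap f = Δ f := by
  rw [laplacian_eq_iteratedFDeriv_orthonormalBasis f (EuclideanSpace.basisFun (Fin n) ℝ)]
  funext x
  simp [lap]

/-- A harmonic polynomial homogeneous of degree ℓ restricts to an eigenfunction of the
spherical Laplacian with eigenvalue −ℓ(k+ℓ−1). -/
theorem spherical_harmonic_eigenfunction (k ℓ : ℕ) (p : MvPolynomial (Fin (k+1)) ℝ)
    (hharm : ∀ x : EuclideanSpace ℝ (Fin (k+1)), lap (fun y => eval y p) x = 0)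
    (hhom : ∀ (t : ℝ), 0 < t → ∀ x : EuclideanSpace ℝ (Fin (k+1)),
      eval (t • x : EuclideanSpace ℝ (Fin (k+1))) p = t ^ ℓ * eval x p) :
    ∀ θ : EuclideanSpace ℝ (Fin (k+1)), ‖θ‖ = 1 →
      sphereLaplacian (fun y => eval y p) θ =
        -((ℓ : ℝ) * ((k : ℝ) + (ℓ : ℝ) - 1)) * eval θ p := by
  intro θ hθ
  have hp : ContDiff ℝ 2 (fun y : EuclideanSpace ℝ (Fin (k+1)) => eval y p) :=
    (MvPolynomial.contDiff_eval p).comp PiLp.contDiff_ofLp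
  rw [sphereLaplacian, lap_eq_laplacian,
    laplacian_comp_normalize_of_homogeneous hp.contDiffAt hhom hθ, ← lap_eq_laplacian, hharm θ,
    finrank_euclideanSpace_fin]
  push_cast
  ring
end

section
/- Let R be an algebraic curvature tensor on ℝ^{k+1}. Then ∫_{S^k} Σ_{i,j=1}^{k+1} R(Θ,E_i,Θ,E_j)² dσ = Vol(S^k)/((k+1)(k+3)) · (‖Ric‖² + (3/2)‖R‖²), where Ric_{ij} = Σ_p R(E_p,E_i,E_p,E_j), ‖Ric‖² = Σ_{ij} Ric_{ij}², and ‖R‖² = Σ_{ijpq} R_{ijpq}². -/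
/-!
The integrand is `∑ i j, (θᵀ A_ij θ)²` with `A_ij p q = R p i q j`, so everything reduces to the
fourth moments `∫ θ_p θ_q θ_r θ_s dσ`. Invariance of the Hausdorff measure under linear isometries
makes a moment vanish unless its indices pair up (reflect `θ_p ↦ -θ_p`), and makes `∫ ⟪v, θ⟫⁴`
depend only on `‖v‖` (reflect `v` onto `w`); with `v = e_p ± e_q` this gives
`∫ θ_p⁴ = 3 ∫ θ_p² θ_q²`, and `∑ θ_p² = 1` on the sphere fixes the constant:
`∫ θ_p θ_q θ_r θ_s = Vol / (n (n + 2)) · (δ_pq δ_rs + δ_pr δ_qs + δ_ps δ_qr)`.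
Hence `∫ (θᵀ A θ)² = Vol / (n (n + 2)) · ((tr A)² + ‖A‖² + tr (A²))`, and the first Bianchi identity
turns `∑ tr (A_ij²)` into `‖R‖² / 2`. The sphere has finite Hausdorff measure because it is covered
by the images of two compact sets under the (smooth, hence locally Lipschitz) inverse stereographic
projections.
-/

open MeasureTheory Metric Module
open scoped ENNReal RealInnerProductSpace

section InnerProductSpace

variable {E : Type*} [NormedAddCommGroup E] [InnerProductSpace ℝ E]
  [MeasurableSpace E] [BorelSpace E]

theorem hausdorffMeasure_hemisphere_lt_top [FiniteDimensional ℝ E] {n : ℕ}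
    (hn : finrank ℝ E = n + 1) {v : E} (hv : ‖v‖ = 1) :
    μH[n] (sphere (0 : E) 1 ∩ {x | ⟪v, x⟫ ≤ 0}) < ∞ := by
  have : Fact (finrank ℝ E = n + 1) := ⟨hn⟩
  set H := sphere (0 : E) 1 ∩ {x | ⟪v, x⟫ ≤ 0}
  have hH : IsCompact H :=
    (isCompact_sphere 0 1).inter_right (isClosed_le (by fun_prop) continuous_const)
  have hK : IsCompact (stereoToFun v '' H) :=
    hH.image_of_continuousOn <| continuousOn_stereoToFun.mono fun x hx => by
      simp only [Set.mem_ofPred_eq, innerSL_apply_apply]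
      linarith [hx.2.out]
  set f : (ℝ ∙ v)ᗮ → E := fun w => stereoInvFunAux v w
  have hf : ContDiff ℝ 1 f := contDiff_stereoInvFunAux.comp (ℝ ∙ v)ᗮ.subtypeL.contDiff
  obtain ⟨C, hC⟩ := hf.locallyLipschitz.locallyLipschitzOn.exists_lipschitzOnWith_of_compact hK
  have hHK : H ⊆ f '' (stereoToFun v '' H) := by
    rintro x ⟨hx, hxv⟩
    have hxv' : x ≠ v := by
      rintro rfl
      simp only [Set.mem_ofPred_eq, real_inner_self_eq_norm_sq, hv] at hxv
      norm_num at hxv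
    exact ⟨_, Set.mem_image_of_mem _ ⟨hx, hxv⟩,
      congrArg Subtype.val (stereo_left_inv hv (x := ⟨x, hx⟩) hxv')⟩
  have hdim : finrank ℝ (ℝ ∙ v)ᗮ = n :=
    Submodule.finrank_orthogonal_span_singleton (norm_ne_zero_iff.mp (by simp [hv]))
  have hKfin : μH[n] (stereoToFun v '' H) < ∞ := by
    rw [← hdim]
    exact hK.measure_lt_top
  calc μH[n] H ≤ μH[n] (f '' (stereoToFun v '' H)) := measure_mono hHK
    _ ≤ (C : ℝ≥0∞) ^ (n : ℝ) * μH[n] (stereoToFun v '' H) :=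
        hC.hausdorffMeasure_image_le (Nat.cast_nonneg n)
    _ < ∞ := ENNReal.mul_lt_top (by simp) hKfin

theorem hausdorffMeasure_sphere_lt_top [FiniteDimensional ℝ E] {n : ℕ}
    (hn : finrank ℝ E = n + 1) : μH[n] (sphere (0 : E) 1) < ∞ := by
  have : Nontrivial E := Module.nontrivial_of_finrank_eq_succ hn
  obtain ⟨v, hv⟩ := (NormedSpace.sphere_nonempty (x := (0 : E)) (r := 1)).mpr zero_le_one
  rw [mem_sphere_zero_iff_norm] at hv
  have hcover : sphere (0 : E) 1 ⊆
      (sphere 0 1 ∩ {x | ⟪v, x⟫ ≤ 0}) ∪ (sphere 0 1 ∩ {x | ⟪-v, x⟫ ≤ 0}) := by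
    intro x hx
    rcases le_total ⟪v, x⟫ 0 with h | h
    · exact Or.inl ⟨hx, h⟩
    · exact Or.inr ⟨hx, by simpa [inner_neg_left] using h⟩
  exact (measure_mono hcover).trans_lt <| (measure_union_le _ _).trans_lt <|
    ENNReal.add_lt_top.mpr ⟨hausdorffMeasure_hemisphere_lt_top hn hv,
      hausdorffMeasure_hemisphere_lt_top hn (by rwa [norm_neg])⟩

theorem integrable_sphere_of_continuous [FiniteDimensional ℝ E] {d : ℝ}
    [IsFiniteMeasure ((μH[d] : Measure E).restrict (sphere 0 1))] {f : E → ℝ}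
    (hf : Continuous f) : Integrable f ((μH[d] : Measure E).restrict (sphere 0 1)) := by
  simpa [IntegrableOn, Measure.restrict_restrict_of_subset subset_rfl] using
    hf.continuousOn.integrableOn_compact
      (μ := (μH[d] : Measure E).restrict (sphere 0 1)) (isCompact_sphere 0 1)

theorem integral_sphere_comp_linearIsometryEquiv (U : E ≃ₗᵢ[ℝ] E) (f : E → ℝ) (d : ℝ) :
    ∫ θ in sphere (0 : E) 1, f (U θ) ∂μH[d] = ∫ θ in sphere (0 : E) 1, f θ ∂μH[d] := by
  have hpre : U ⁻¹' sphere 0 1 = sphere 0 1 := by ext; simp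
  calc ∫ θ in sphere (0 : E) 1, f (U θ) ∂μH[d] = ∫ θ in U ⁻¹' sphere 0 1, f (U θ) ∂μH[d] := by
        rw [hpre]
    _ = _ := (U.toIsometryEquiv.measurePreserving_hausdorffMeasure d).setIntegral_preimage_emb
        U.toHomeomorph.measurableEmbedding f _

theorem integral_sphere_inner_eq_of_norm_eq {v w : E} (h : ‖v‖ = ‖w‖) (g : ℝ → ℝ) (d : ℝ) :
    ∫ θ in sphere (0 : E) 1, g ⟪v, θ⟫ ∂μH[d] = ∫ θ in sphere (0 : E) 1, g ⟪w, θ⟫ ∂μH[d] := by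
  set U := (ℝ ∙ (v - w))ᗮ.reflection
  have hU : ∀ θ, ⟪w, θ⟫ = ⟪v, U θ⟫ := fun θ => by
    rw [← Submodule.reflection_sub h, ← U.inner_map_map, Submodule.reflection_reflection]
  simp_rw [hU]
  exact (integral_sphere_comp_linearIsometryEquiv U (fun θ => g ⟪v, θ⟫) d).symm

end InnerProductSpace

section EuclideanSpace

variable {ι : Type*} [Fintype ι] [DecidableEq ι]

theorem reflection_orthogonal_single_apply (p : ι) (θ : EuclideanSpace ℝ ι) (i : ι) :
    (ℝ ∙ EuclideanSpace.single p (1 : ℝ))ᗮ.reflection θ i = if i = p then -θ i else θ i := by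
  rw [Submodule.reflection_orthogonal_apply, Submodule.reflection_singleton_apply]
  by_cases h : i = p <;> simp [h, EuclideanSpace.inner_single_left]
  ring

theorem integral_sphere_coord_mul_eq_zero {p q r s : ι} (hq : q ≠ p) (hr : r ≠ p) (hs : s ≠ p)
    (d : ℝ) : ∫ θ in sphere (0 : EuclideanSpace ℝ ι) 1, θ p * θ q * θ r * θ s ∂μH[d] = 0 := by
  have h := integral_sphere_comp_linearIsometryEquiv
    (ℝ ∙ EuclideanSpace.single p (1 : ℝ))ᗮ.reflection (fun θ => θ p * θ q * θ r * θ s) d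
  simp only [reflection_orthogonal_single_apply, if_true, if_neg hq, if_neg hr, if_neg hs,
    neg_mul, integral_neg] at h
  linarith

theorem integral_sphere_coord_mul_eq_zero_of_not_paired {p q r s : ι}
    (h : ¬((p = q ∧ r = s) ∨ (p = r ∧ q = s) ∨ (p = s ∧ q = r))) (d : ℝ) :
    ∫ θ in sphere (0 : EuclideanSpace ℝ ι) 1, θ p * θ q * θ r * θ s ∂μH[d] = 0 := by
  by_cases hp : q ≠ p ∧ r ≠ p ∧ s ≠ p
  · exact integral_sphere_coord_mul_eq_zero hp.1 hp.2.1 hp.2.2 d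
  by_cases hq : p ≠ q ∧ r ≠ q ∧ s ≠ q
  · rw [show (fun θ : EuclideanSpace ℝ ι => θ p * θ q * θ r * θ s) =
      fun θ => θ q * θ p * θ r * θ s from funext fun θ => by ring]
    exact integral_sphere_coord_mul_eq_zero hq.1 hq.2.1 hq.2.2 d
  by_cases hr : p ≠ r ∧ q ≠ r ∧ s ≠ r
  · rw [show (fun θ : EuclideanSpace ℝ ι => θ p * θ q * θ r * θ s) =
      fun θ => θ r * θ p * θ q * θ s from funext fun θ => by ring]
    exact integral_sphere_coord_mul_eq_zero hr.1 hr.2.1 hr.2.2 d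
  by_cases hs : p ≠ s ∧ q ≠ s ∧ r ≠ s
  · rw [show (fun θ : EuclideanSpace ℝ ι => θ p * θ q * θ r * θ s) =
      fun θ => θ s * θ p * θ q * θ r from funext fun θ => by ring]
    exact integral_sphere_coord_mul_eq_zero hs.1 hs.2.1 hs.2.2 d
  grind

theorem integral_sphere_coord_pow_four_eq (p q : ι) (d : ℝ) :
    ∫ θ in sphere (0 : EuclideanSpace ℝ ι) 1, θ p ^ 4 ∂μH[d] =
      ∫ θ in sphere (0 : EuclideanSpace ℝ ι) 1, θ q ^ 4 ∂μH[d] := by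
  simpa [EuclideanSpace.inner_single_left] using integral_sphere_inner_eq_of_norm_eq
    (v := EuclideanSpace.single p (1 : ℝ)) (w := EuclideanSpace.single q (1 : ℝ)) (by simp)
    (· ^ 4) d

theorem integral_sphere_linear_comb_pow_four {p q : ι} (hpq : p ≠ q) (a b d : ℝ) :
    ∫ θ in sphere (0 : EuclideanSpace ℝ ι) 1, (a * θ p + b * θ q) ^ 4 ∂μH[d] =
      (a ^ 2 + b ^ 2) ^ 2 * ∫ θ in sphere (0 : EuclideanSpace ℝ ι) 1, θ p ^ 4 ∂μH[d] := by
  have hab : 0 ≤ a ^ 2 + b ^ 2 := by positivity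
  have hnorm : ‖EuclideanSpace.single p a + EuclideanSpace.single q b‖ =
      ‖EuclideanSpace.single p √(a ^ 2 + b ^ 2)‖ := by
    rw [← sq_eq_sq₀ (norm_nonneg _) (norm_nonneg _), EuclideanSpace.norm_sq_eq,
      EuclideanSpace.norm_sq_eq]
    simp [Finset.sum_add_distrib, add_sq, ite_mul, hpq.symm, Real.sq_sqrt hab]
  have h := integral_sphere_inner_eq_of_norm_eq hnorm (· ^ 4) d
  simp only [inner_add_left, EuclideanSpace.inner_single_left, conj_trivial] at h
  rw [h, ← integral_const_mul]
  congr 1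
  ext θ
  rw [mul_pow, show 4 = 2 * 2 from rfl, pow_mul, Real.sq_sqrt hab]

variable {d : ℝ} [IsFiniteMeasure ((μH[d] : Measure (EuclideanSpace ℝ ι)).restrict (sphere 0 1))]

theorem integral_sphere_coord_sq_mul_coord_sq (a p q : ι) :
    ∫ θ in sphere (0 : EuclideanSpace ℝ ι) 1, θ p * θ p * θ q * θ q ∂μH[d] =
      (∫ θ in sphere (0 : EuclideanSpace ℝ ι) 1, θ a ^ 4 ∂μH[d]) / 3 *
        (1 + 2 * if p = q then 1 else 0) := by
  rw [← integral_sphere_coord_pow_four_eq p a]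
  by_cases hpq : p = q
  · subst hpq
    rw [show (fun θ : EuclideanSpace ℝ ι => θ p * θ p * θ p * θ p) = fun θ => θ p ^ 4 from
      funext fun θ => by ring, if_pos rfl]
    ring
  have h : ∫ θ in sphere (0 : EuclideanSpace ℝ ι) 1, 12 * (θ p * θ p * θ q * θ q) ∂μH[d] =
      ∫ θ in sphere (0 : EuclideanSpace ℝ ι) 1, ((1 * θ p + 1 * θ q) ^ 4
        + (1 * θ p + -1 * θ q) ^ 4 - 2 * θ p ^ 4 - 2 * θ q ^ 4) ∂μH[d] := by
    congr 1
    ext θ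
    ring
  simp (disch := exact integrable_sphere_of_continuous (by fun_prop)) only [integral_const_mul,
    integral_add, integral_sub, integral_sphere_linear_comb_pow_four hpq,
    integral_sphere_coord_pow_four_eq q p] at h
  simp only [if_neg hpq]
  linarith

theorem integral_sphere_coord_pow_four_div_three (a : ι) :
    (∫ θ in sphere (0 : EuclideanSpace ℝ ι) 1, θ a ^ 4 ∂μH[d]) / 3 =
      μH[d].real (sphere (0 : EuclideanSpace ℝ ι) 1) / (Fintype.card ι * (Fintype.card ι + 2)) := by
  have : Nonempty ι := ⟨a⟩
  have hsum : ∑ p, ∑ q, ∫ θ in sphere (0 : EuclideanSpace ℝ ι) 1, θ p * θ p * θ q * θ q ∂μH[d]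
      = μH[d].real (sphere (0 : EuclideanSpace ℝ ι) 1) := by
    calc _ = ∫ θ in sphere (0 : EuclideanSpace ℝ ι) 1, ∑ p, ∑ q, θ p * θ p * θ q * θ q ∂μH[d] := by
          simp (disch := intros; exact integrable_sphere_of_continuous (by fun_prop)) only
            [integral_finsetSum]
      _ = ∫ θ in sphere (0 : EuclideanSpace ℝ ι) 1, 1 ∂μH[d] := by
          refine setIntegral_congr_fun isClosed_sphere.measurableSet fun θ hθ => ?_
          have h : ∑ p, θ p ^ 2 = 1 := by
            rw [mem_sphere_zero_iff_norm] at hθ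
            simpa [hθ, Real.norm_eq_abs, sq_abs] using (EuclideanSpace.norm_sq_eq θ).symm
          rw [show (1 : ℝ) = (∑ p, θ p ^ 2) * ∑ q, θ q ^ 2 by rw [h, one_mul], Finset.sum_mul_sum]
          exact Finset.sum_congr rfl fun p _ => Finset.sum_congr rfl fun q _ => by ring
      _ = _ := by simp
  simp only [integral_sphere_coord_sq_mul_coord_sq a] at hsum
  simp only [mul_ite, mul_one, mul_zero, ← Finset.mul_sum, Finset.sum_add_distrib,
    Finset.sum_const, Finset.card_univ, nsmul_eq_mul, Finset.sum_ite_eq, Finset.mem_univ,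
    ↓reduceIte] at hsum
  rw [eq_div_iff (by positivity), ← hsum]
  ring

theorem integral_sphere_coord_mul (p q r s : ι) :
    ∫ θ in sphere (0 : EuclideanSpace ℝ ι) 1, θ p * θ q * θ r * θ s ∂μH[d] =
      μH[d].real (sphere (0 : EuclideanSpace ℝ ι) 1) / (Fintype.card ι * (Fintype.card ι + 2)) *
        ((if p = q then 1 else 0) * (if r = s then 1 else 0)
          + (if p = r then 1 else 0) * (if q = s then 1 else 0)
          + (if p = s then 1 else 0) * (if q = r then 1 else 0)) := by
  by_cases hpaired : (p = q ∧ r = s) ∨ (p = r ∧ q = s) ∨ (p = s ∧ q = r)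
  · rcases hpaired with ⟨rfl, rfl⟩ | ⟨rfl, rfl⟩ | ⟨rfl, rfl⟩
    · rw [integral_sphere_coord_sq_mul_coord_sq p,
        integral_sphere_coord_pow_four_div_three]
      by_cases hpr : p = r <;> simp only [hpr, ↓reduceIte] <;> ring
    · rw [show (fun θ : EuclideanSpace ℝ ι => θ p * θ q * θ p * θ q) =
          fun θ => θ p * θ p * θ q * θ q from funext fun θ => by ring,
        integral_sphere_coord_sq_mul_coord_sq p,
        integral_sphere_coord_pow_four_div_three]
      by_cases hpq : p = q <;> simp only [hpq, ↓reduceIte] <;> ring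
    · rw [show (fun θ : EuclideanSpace ℝ ι => θ p * θ q * θ q * θ p) =
          fun θ => θ p * θ p * θ q * θ q from funext fun θ => by ring,
        integral_sphere_coord_sq_mul_coord_sq p,
        integral_sphere_coord_pow_four_div_three]
      by_cases hpq : p = q <;> simp only [hpq, ↓reduceIte] <;> ring
  · rw [integral_sphere_coord_mul_eq_zero_of_not_paired hpaired]
    grind

theorem integral_sphere_quadratic_form_sq (A : ι → ι → ℝ) :
    ∫ θ in sphere (0 : EuclideanSpace ℝ ι) 1, (∑ p, ∑ q, θ p * θ q * A p q) ^ 2 ∂μH[d] =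
      μH[d].real (sphere (0 : EuclideanSpace ℝ ι) 1) / (Fintype.card ι * (Fintype.card ι + 2)) *
        ((∑ p, A p p) ^ 2 + ∑ p, ∑ q, A p q ^ 2 + ∑ p, ∑ q, A p q * A q p) := by
  have expand : ∀ θ : EuclideanSpace ℝ ι, (∑ p, ∑ q, θ p * θ q * A p q) ^ 2 =
      ∑ p, ∑ q, ∑ r, ∑ s, A p q * A r s * (θ p * θ q * θ r * θ s) := fun θ => by
    simp only [sq, Finset.sum_mul_sum]
    refine Finset.sum_congr rfl fun p _ => ?_
    rw [Finset.sum_comm]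
    exact Finset.sum_congr rfl fun q _ => Finset.sum_congr rfl fun r _ =>
      Finset.sum_congr rfl fun s _ => by ring
  simp_rw [expand]
  simp (disch := intros; exact integrable_sphere_of_continuous (by fun_prop)) only
    [integral_finsetSum, integral_const_mul, integral_sphere_coord_mul]
  simp only [mul_add, mul_ite, mul_one, mul_zero, Finset.sum_add_distrib, Finset.sum_ite_eq,
    Finset.mem_univ, ↓reduceIte, Finset.sum_ite_irrel, Finset.sum_const_zero]
  simp only [← Finset.sum_mul, sq, Finset.sum_mul_sum]
  ring

end EuclideanSpace

section Curvature

variable {ι : Type*} [Fintype ι]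

theorem sum_sum_sum_sum_interleave (f : ι → ι → ι → ι → ℝ) :
    ∑ i, ∑ j, ∑ p, ∑ q, f p i q j = ∑ p, ∑ i, ∑ q, ∑ j, f p i q j :=
  calc _ = ∑ i, ∑ p, ∑ j, ∑ q, f p i q j := Finset.sum_congr rfl fun _ _ => Finset.sum_comm
    _ = ∑ p, ∑ i, ∑ j, ∑ q, f p i q j := Finset.sum_comm
    _ = _ := Finset.sum_congr rfl fun _ _ => Finset.sum_congr rfl fun _ _ => Finset.sum_comm

theorem sum_curvature_mul_swap_eq_half_sum_sq (R : ι → ι → ι → ι → ℝ)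
    (hanti : ∀ i j p q, R i j p q = -R i j q p) (hpair : ∀ i j p q, R i j p q = R p q i j)
    (hbianchi : ∀ i j p q, R i j p q + R i p q j + R i q j p = 0) :
    ∑ a, ∑ b, ∑ c, ∑ d, R a b c d * R c b a d = 1 / 2 * ∑ a, ∑ b, ∑ c, ∑ d, R a b c d ^ 2 := by
  have swap : ∑ a, ∑ b, ∑ c, ∑ d, R a b c d * R c b a d =
      ∑ a, ∑ b, ∑ c, ∑ d, R a b c d * R a c b d := by
    refine Finset.sum_congr rfl fun a _ => Finset.sum_congr rfl fun b _ => ?_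
    rw [Finset.sum_comm]
    refine Finset.sum_congr rfl fun c _ => Finset.sum_congr rfl fun d _ => ?_
    rw [hpair d b a c, hanti a b c d, hanti a c d b]
    ring
  have bianchi : ∑ a, ∑ b, ∑ c, ∑ d, R a b c d * R a c b d =
      ∑ a, ∑ b, ∑ c, ∑ d, R a b c d ^ 2 - ∑ a, ∑ b, ∑ c, ∑ d, R a b c d * R c b a d := by
    simp only [← Finset.sum_sub_distrib]
    refine Finset.sum_congr rfl fun a _ => Finset.sum_congr rfl fun b _ =>
      Finset.sum_congr rfl fun c _ => Finset.sum_congr rfl fun d _ => ?_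
    rw [hpair c b a d]
    linear_combination R a b c d * (hbianchi a c b d - hanti a b d c)
  linarith

end Curvature

theorem sphere_integral_curvature_general (k : ℕ)
    (R : Fin (k+1) → Fin (k+1) → Fin (k+1) → Fin (k+1) → ℝ)
    (hanti₂ : ∀ i j p q, R i j p q = -R i j q p)
    (hpair : ∀ i j p q, R i j p q = R p q i j)
    (hbianchi : ∀ i j p q, R i j p q + R i p q j + R i q j p = 0) :
    ∫ θ in sphere (0 : EuclideanSpace ℝ (Fin (k+1))) 1,
        (∑ i, ∑ j, (∑ p, ∑ q, θ p * θ q * R p i q j) ^ 2) ∂μH[k] =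
      (μH[k] (sphere (0 : EuclideanSpace ℝ (Fin (k+1))) 1)).toReal / ((k + 1) * (k + 3)) *
        ((∑ i, ∑ j, (∑ p, R p i p j) ^ 2) +
          3 / 2 * ∑ i, ∑ j, ∑ p, ∑ q, (R i j p q) ^ 2) := by
  have : IsFiniteMeasure
      ((μH[k] : Measure (EuclideanSpace ℝ (Fin (k+1)))).restrict (sphere 0 1)) :=
    isFiniteMeasure_restrict.mpr (hausdorffMeasure_sphere_lt_top finrank_euclideanSpace_fin).ne
  simp (disch := intros; exact integrable_sphere_of_continuous (by fun_prop)) only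
    [integral_finsetSum, integral_sphere_quadratic_form_sq]
  simp only [← Finset.mul_sum, Finset.sum_add_distrib]
  rw [sum_sum_sum_sum_interleave (fun a b c d => R a b c d ^ 2),
    sum_sum_sum_sum_interleave (fun a b c d => R a b c d * R c b a d),
    sum_curvature_mul_swap_eq_half_sum_sq R hanti₂ hpair hbianchi, Fintype.card_fin,
    measureReal_def]
  push_cast
  ring

/-- For an algebraic curvature tensor `R` on `ℝ^{k+1}`,
`∫_{S^k} Σ_{i,j} R(Θ,E_i,Θ,E_j)² = Vol(S^k)/((k+1)(k+3)) · (‖Ric‖² + (3/2)‖R‖²)`,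
where `Ric i j = Σ_p R p i p j`. -/
theorem sphere_integral_curvature (k : ℕ)
    (R : Fin (k+1) → Fin (k+1) → Fin (k+1) → Fin (k+1) → ℝ)
    (hanti₁ : ∀ i j p q, R i j p q = -R j i p q)
    (hanti₂ : ∀ i j p q, R i j p q = -R i j q p)
    (hpair : ∀ i j p q, R i j p q = R p q i j)
    (hbianchi : ∀ i j p q, R i j p q + R i p q j + R i q j p = 0) :
    ∫ θ in sphere (0 : EuclideanSpace ℝ (Fin (k+1))) 1,
        (∑ i, ∑ j, (∑ p, ∑ q, θ p * θ q * R p i q j) ^ 2) ∂μH[k] =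
      (μH[k] (sphere (0 : EuclideanSpace ℝ (Fin (k+1))) 1)).toReal / ((k + 1) * (k + 3)) *
        ((∑ i, ∑ j, (∑ p, R p i p j) ^ 2) +
          3 / 2 * ∑ i, ∑ j, ∑ p, ∑ q, (R i j p q) ^ 2) :=
  sphere_integral_curvature_general k R hanti₂ hpair hbianchi
end
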